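/- Let U_1, U_2, …, U_n, U_{n+1} be exchangeable real random variables, and let V_{(1)} ≤ V_{(2)} ≤ ⋯ ≤ V_{(n)} denote the order statistics of the subset {U_1, U_2, …, U_n}. Then for each k = 1, …, n, Pr( U_{n+1} ≤ V_{(k)} ) ≥ k/(n+1). -/

import Mathlib

open MeasureTheory
open scoped ENNReal

/-- The `k`-th order statistic (0-indexed) of the finite tuple `u`: the values of `u`
arranged in nondecreasing order (ties allowed), evaluated at position `k`. -/
noncomputable def orderStat {n : ℕ} (u : Fin n → ℝ) (k : Fin n) : ℝ :=
  u (Tuple.sort u k)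

lemma card_lt_sort_le {n : ℕ} (v : Fin n → ℝ) (p : Fin n) :
    (Finset.univ.filter fun i => v i < v (Tuple.sort v p)).card ≤ (p : ℕ) := by
  classical
  have hmono := Tuple.monotone_sort v
  calc (Finset.univ.filter fun i => v i < v (Tuple.sort v p)).card
      ≤ (Finset.Iio p).card := by
        apply Finset.card_le_card_of_injOn (fun i => (Tuple.sort v).symm i)
        · intro i hi
          simp only [Finset.mem_coe, Finset.mem_filter, Finset.mem_univ, true_and] at hi
          simp only [Finset.mem_coe, Finset.mem_Iio]
          by_contra h
          push_neg at h
          have h2 : v (Tuple.sort v p) ≤ v (Tuple.sort v ((Tuple.sort v).symm i)) := hmono h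
          simp only [Equiv.apply_symm_apply] at h2
          exact absurd hi (not_lt.2 h2)
        · intro a _ b _ h
          exact (Tuple.sort v).symm.injective h
    _ = p := Fin.card_Iio p

lemma le_orderStat_iff {n : ℕ} (u : Fin n → ℝ) (k : Fin n) (x : ℝ) :
    x ≤ orderStat u k ↔ (Finset.univ.filter fun i => u i < x).card ≤ (k : ℕ) := by
  classical
  constructor
  · intro h
    refine le_trans (Finset.card_le_card ?_) (card_lt_sort_le u k)
    intro i hi
    simp only [Finset.mem_filter, Finset.mem_univ, true_and] at hi ⊢
    exact lt_of_lt_of_le hi h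
  · intro h
    by_contra hx
    push_neg at hx
    have hle : (Finset.Iic k).card ≤ (Finset.univ.filter fun i => u i < x).card := by
      apply Finset.card_le_card_of_injOn (fun p => Tuple.sort u p)
      · intro p hp
        simp only [Finset.mem_coe, Finset.mem_Iic] at hp
        simp only [Finset.mem_coe, Finset.mem_filter, Finset.mem_univ, true_and]
        exact lt_of_le_of_lt (Tuple.monotone_sort u hp) hx
      · intro a _ b _ hab
        exact (Tuple.sort u).injective hab
    rw [Fin.card_Iic] at hle
    omega

/-- At least `k+1` indices `j` have at most `k` other coordinates strictly below them. -/
lemma rank_count {n : ℕ} (v : Fin (n + 1) → ℝ) (k : Fin n) :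
    (k : ℕ) + 1 ≤ (Finset.univ.filter fun j : Fin (n + 1) =>
      (Finset.univ.filter fun i => i ≠ j ∧ v i < v j).card ≤ (k : ℕ)).card := by
  classical
  have hle : (Finset.Iic (k.castSucc)).card ≤ (Finset.univ.filter fun j : Fin (n + 1) =>
      (Finset.univ.filter fun i => i ≠ j ∧ v i < v j).card ≤ (k : ℕ)).card := by
    apply Finset.card_le_card_of_injOn (fun p => Tuple.sort v p)
    · intro p hp
      simp only [Finset.mem_coe, Finset.mem_Iic] at hp
      simp only [Finset.mem_coe, Finset.mem_filter, Finset.mem_univ, true_and]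
      calc (Finset.univ.filter fun i => i ≠ Tuple.sort v p ∧ v i < v (Tuple.sort v p)).card
          ≤ (Finset.univ.filter fun i => v i < v (Tuple.sort v p)).card := by
            apply Finset.card_le_card
            intro i hi
            simp only [Finset.mem_filter, Finset.mem_univ, true_and] at hi ⊢
            exact hi.2
        _ ≤ (p : ℕ) := card_lt_sort_le v p
        _ ≤ (k : ℕ) := by exact_mod_cast hp
    · intro a _ b _ hab
      exact (Tuple.sort v).injective hab
  rw [Fin.card_Iic] at hle
  simpa using hle

lemma castSucc_filter_card {n : ℕ} (v : Fin (n + 1) → ℝ) :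
    (Finset.univ.filter fun i : Fin n => v i.castSucc < v (Fin.last n)).card
      = (Finset.univ.filter fun i : Fin (n + 1) => i ≠ Fin.last n ∧ v i < v (Fin.last n)).card := by
  classical
  have himg : (Finset.univ.filter fun i : Fin (n + 1) => i ≠ Fin.last n ∧ v i < v (Fin.last n))
      = (Finset.univ.filter fun i : Fin n => v i.castSucc < v (Fin.last n)).image Fin.castSucc := by
    ext j
    simp only [Finset.mem_filter, Finset.mem_univ, true_and, Finset.mem_image]
    constructor
    · rintro ⟨hne, hP⟩
      obtain ⟨i, rfl⟩ := Fin.exists_castSucc_eq.2 hne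
      exact ⟨i, hP, rfl⟩
    · rintro ⟨i, hP, rfl⟩
      exact ⟨Fin.ne_last_of_lt (Fin.castSucc_lt_last i), hP⟩
  rw [himg, Finset.card_image_of_injective _ (Fin.castSucc_injective n)]

/-- Lemma 4: Let `U_1, …, U_{n+1}` be exchangeable real random variables
and let `V_{(1)} ≤ ⋯ ≤ V_{(n)}` be the order statistics of the subset `U_1, …, U_n`.
Then for each `k = 1, …, n` (here `k : Fin n`, 0-indexed),
`Pr( U_{n+1} ≤ V_{(k)} ) ≥ k/(n+1)`. -/
theorem prob_last_le_orderStat_init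
    {Ω : Type*} [MeasurableSpace Ω] (μ : Measure Ω) [IsProbabilityMeasure μ]
    {n : ℕ} (U : Fin (n + 1) → Ω → ℝ) (hU : ∀ i, Measurable (U i))
    (hexch : ∀ σ : Equiv.Perm (Fin (n + 1)),
      Measure.map (fun ω => fun i => U (σ i) ω) μ = Measure.map (fun ω => fun i => U i ω) μ)
    (k : Fin n) :
    ((k : ℕ) + 1 : ℝ) / (n + 1)
      ≤ (μ {ω | U (Fin.last n) ω ≤ orderStat (fun i : Fin n => U i.castSucc ω) k}).toReal := by
  classical
  set S : Fin (n + 1) → Set (Fin (n + 1) → ℝ) := fun j =>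
    {v | (Finset.univ.filter fun i => i ≠ j ∧ v i < v j).card ≤ (k : ℕ)} with hSdef
  set A : Fin (n + 1) → Set Ω := fun j => (fun ω i => U i ω) ⁻¹' S j with hAdef
  have hUm : Measurable (fun ω => fun i => U i ω) := measurable_pi_lambda _ hU
  -- measurability of S j
  have hS : ∀ j, MeasurableSet (S j) := by
    intro j
    have hrw : S j = ⋃ (T : Finset (Fin (n + 1))) (_ : T.card ≤ (k : ℕ)),
        ⋂ i, {v : Fin (n + 1) → ℝ | i ∈ T ↔ (i ≠ j ∧ v i < v j)} := by
      ext v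
      simp only [hSdef, Set.mem_setOf_eq, Set.mem_iUnion, Set.mem_iInter]
      constructor
      · intro h
        exact ⟨Finset.univ.filter fun i => i ≠ j ∧ v i < v j, h, fun i => by simp⟩
      · rintro ⟨T, hT, h⟩
        have : (Finset.univ.filter fun i => i ≠ j ∧ v i < v j) = T := by
          ext i; simp [h i]
        rw [this]; exact hT
    rw [hrw]
    refine MeasurableSet.iUnion fun T => MeasurableSet.iUnion fun _ =>
      MeasurableSet.iInter fun i => ?_
    by_cases hiT : i ∈ T
    · by_cases hij : i = j
      · simp [hiT, hij]
      · have : {v : Fin (n + 1) → ℝ | i ∈ T ↔ (i ≠ j ∧ v i < v j)}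
            = {v | v i < v j} := by ext v; simp [hiT, hij]
        rw [this]
        exact measurableSet_lt (measurable_pi_apply i) (measurable_pi_apply j)
    · by_cases hij : i = j
      · simp [hiT, hij]
      · have : {v : Fin (n + 1) → ℝ | i ∈ T ↔ (i ≠ j ∧ v i < v j)}
            = {v | v i < v j}ᶜ := by ext v; simp [hiT, hij]
        rw [this]
        exact (measurableSet_lt (measurable_pi_apply i) (measurable_pi_apply j)).compl
  have hA : ∀ j, MeasurableSet (A j) := fun j => hUm (hS j)
  -- exchangeability: all μ (A j) equal
  have hA_eq : ∀ j, μ (A j) = μ (A (Fin.last n)) := by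
    intro j
    set σ : Equiv.Perm (Fin (n + 1)) := Equiv.swap j (Fin.last n) with hσ
    have hσm : Measurable (fun v : Fin (n + 1) → ℝ => v ∘ σ) :=
      measurable_pi_lambda _ (fun i => measurable_pi_apply (σ i))
    have hpre : (fun v : Fin (n + 1) → ℝ => v ∘ σ) ⁻¹' S (Fin.last n) = S j := by
      ext v
      simp only [hSdef, Set.mem_preimage, Set.mem_setOf_eq, Function.comp]
      have hcard : (Finset.univ.filter fun i => i ≠ Fin.last n ∧ v (σ i) < v (σ (Fin.last n))).card
          = (Finset.univ.filter fun i => i ≠ j ∧ v i < v j).card := by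
        have hσlast : σ (Fin.last n) = j := Equiv.swap_apply_right _ _
        apply Finset.card_bij' (fun i _ => σ i) (fun i _ => σ i)
        · intro i hi
          simp only [Finset.mem_filter, Finset.mem_univ, true_and] at hi ⊢
          refine ⟨?_, by rw [← hσlast]; exact hi.2⟩
          intro hcon
          apply hi.1
          have : σ (σ i) = σ j := by rw [hcon]
          rw [Equiv.swap_apply_self, Equiv.swap_apply_left] at this
          exact this
        · intro i hi
          simp only [Finset.mem_filter, Finset.mem_univ, true_and] at hi ⊢
          constructor
          · intro hcon
            apply hi.1
            have := congrArg σ hcon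
            rw [Equiv.swap_apply_self] at this
            rw [this, Equiv.swap_apply_right]
          · rw [Equiv.swap_apply_self, hσlast]
            exact hi.2
        · intro i _; rw [Equiv.swap_apply_self]
        · intro i _; rw [Equiv.swap_apply_self]
      rw [hcard]
    calc μ (A j) = Measure.map (fun ω i => U i ω) μ (S j) :=
          (Measure.map_apply hUm (hS j)).symm
      _ = Measure.map (fun ω i => U i ω) μ ((fun v : Fin (n + 1) → ℝ => v ∘ σ) ⁻¹' S (Fin.last n)) := by
          rw [hpre]
      _ = Measure.map (fun v : Fin (n + 1) → ℝ => v ∘ σ)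
            (Measure.map (fun ω i => U i ω) μ) (S (Fin.last n)) :=
          (Measure.map_apply hσm (hS (Fin.last n))).symm
      _ = Measure.map (fun ω => fun i => U (σ i) ω) μ (S (Fin.last n)) := by
          rw [Measure.map_map hσm hUm]; rfl
      _ = Measure.map (fun ω i => U i ω) μ (S (Fin.last n)) := by rw [hexch σ]
      _ = μ (A (Fin.last n)) := Measure.map_apply hUm (hS (Fin.last n))
  -- counting lower bound
  have key : (((k : ℕ) + 1 : ℕ) : ℝ≥0∞) ≤ ∑ j : Fin (n + 1), μ (A j) := by
    have h1 : ∑ j : Fin (n + 1), μ (A j)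
        = ∫⁻ ω, ∑ j : Fin (n + 1), (A j).indicator (fun _ => (1 : ℝ≥0∞)) ω ∂μ := by
      rw [lintegral_finset_sum]
      · congr 1
        ext j
        rw [lintegral_indicator_const (hA j), one_mul]
      · exact fun j _ => Measurable.indicator measurable_const (hA j)
    rw [h1]
    have h2 : ∀ ω, (((k : ℕ) + 1 : ℕ) : ℝ≥0∞)
        ≤ ∑ j : Fin (n + 1), (A j).indicator (fun _ => (1 : ℝ≥0∞)) ω := by
      intro ω
      have hcount := rank_count (fun i => U i ω) k
      have hAω : ∀ j, ω ∈ A j ↔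
          (Finset.univ.filter fun i => i ≠ j ∧ U i ω < U j ω).card ≤ (k : ℕ) := by
        intro j; simp [hAdef, hSdef]
      calc (((k : ℕ) + 1 : ℕ) : ℝ≥0∞)
          ≤ ((Finset.univ.filter fun j : Fin (n + 1) =>
              (Finset.univ.filter fun i => i ≠ j ∧ U i ω < U j ω).card ≤ (k : ℕ)).card : ℝ≥0∞) := by
            exact_mod_cast hcount
        _ = ∑ j : Fin (n + 1), (A j).indicator (fun _ => (1 : ℝ≥0∞)) ω := by
            rw [Finset.card_filter]
            push_cast
            congr 1
            ext j
            by_cases h : ω ∈ A j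
            · simp [Set.indicator_of_mem h, (hAω j).1 h]
            · have : ¬ (Finset.univ.filter fun i => i ≠ j ∧ U i ω < U j ω).card ≤ (k : ℕ) :=
                fun hc => h ((hAω j).2 hc)
              simp [Set.indicator_of_notMem h, this]
    calc (((k : ℕ) + 1 : ℕ) : ℝ≥0∞) = ∫⁻ _, (((k : ℕ) + 1 : ℕ) : ℝ≥0∞) ∂μ := by
          simp
      _ ≤ _ := lintegral_mono h2
  -- combine
  have hsum : ∑ j : Fin (n + 1), μ (A j) = (n + 1 : ℝ≥0∞) * μ (A (Fin.last n)) := by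
    rw [Finset.sum_congr rfl (fun j _ => hA_eq j), Finset.sum_const, Finset.card_univ,
      Fintype.card_fin, nsmul_eq_mul]
    push_cast
    ring
  have hbound : (((k : ℕ) + 1 : ℕ) : ℝ≥0∞) / (n + 1 : ℝ≥0∞) ≤ μ (A (Fin.last n)) := by
    apply ENNReal.div_le_of_le_mul'
    rw [← hsum]
    exact key
  -- identify the target set
  have hset : {ω | U (Fin.last n) ω ≤ orderStat (fun i : Fin n => U i.castSucc ω) k}
      = A (Fin.last n) := by
    ext ω
    simp only [Set.mem_setOf_eq, hAdef, hSdef, Set.mem_preimage]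
    rw [le_orderStat_iff]
    rw [castSucc_filter_card (fun i => U i ω)]
  rw [hset]
  have hfin : μ (A (Fin.last n)) ≠ ∞ := measure_ne_top μ _
  have := ENNReal.toReal_mono hfin hbound
  refine le_trans (le_of_eq ?_) this
  have hnum : ((((k : ℕ) + 1 : ℕ)) : ℝ≥0∞).toReal = ((k : ℕ) : ℝ) + 1 := by
    push_cast
    rw [ENNReal.toReal_add (ENNReal.natCast_ne_top _) ENNReal.one_ne_top]
    simp
  have hden : ((n : ℝ≥0∞) + 1).toReal = (n : ℝ) + 1 := by
    rw [ENNReal.toReal_add (ENNReal.natCast_ne_top n) ENNReal.one_ne_top]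
    simp
  rw [ENNReal.toReal_div, hnum, hden]
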